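/- arXiv:2106.12868 — 5 statements merged into one kernel-verified Lean document; each statement's English description precedes it below -/
import Mathlib

section
/- In a Kripke lattice model where each accessibility relation R_a is reflexive, the awareness map π_a is idempotent: for all worlds w_X in the lattice, π_a(π_a(w_X)) = π_a(w_X). -/
variable {W At : Type}

/-- Downwards: `π(w_X) = w_Y` for some `Y ⊆ X`. -/
def Downwards (π : W × Set At → W × Set At) : Prop :=
  ∀ (w : W) (X : Set At), ∃ Y : Set At, Y ⊆ X ∧ π (w, X) = (w, Y)

/-- Introspective Idempotence: if `π(w_X) = w_Y`, then every world `v_Y` in the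
information cell `I(w_Y) = {v_Y : (w_Y, v_Y) ∈ R_Y}` (where `(w_Y, v_Y) ∈ R_Y` iff
`(w, v) ∈ R`) is mapped by `π` to some `u_Y` in `I(w_Y)`. -/
def IntroIdem (R : W → W → Prop) (π : W × Set At → W × Set At) : Prop :=
  ∀ (w : W) (X Y : Set At), π (w, X) = (w, Y) →
    ∀ v : W, R w v → ∃ u : W, R w u ∧ π (v, Y) = (u, Y)

/-- No Surprises: if `π(w_X) = w_Z` then for all `Y ⊆ X`, `π(w_Y) = w_{Y ∩ Z}`. -/
def NoSurprises (π : W × Set At → W × Set At) : Prop :=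
  ∀ (w : W) (X Z : Set At), π (w, X) = (w, Z) →
    ∀ Y : Set At, Y ⊆ X → π (w, Y) = (w, Y ∩ Z)

theorem NoSurprises.apply_eq_of_subset {π : W × Set At → W × Set At} (hNS : NoSurprises π)
    {w : W} {X Z : Set At} (h : π (w, X) = (w, Z)) (hZX : Z ⊆ X) : π (w, Z) = (w, Z) := by
  simpa using hNS w X Z h Z hZX

theorem awarenessMap_idempotent_general (π : W × Set At → W × Set At)
    (hD : Downwards π) (hNS : NoSurprises π) :
    ∀ (w : W) (X : Set At), π (π (w, X)) = π (w, X) := by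
  intro w X
  obtain ⟨Y, hYX, hπ⟩ := hD w X
  rw [hπ, hNS.apply_eq_of_subset hπ hYX]

/-- In a Kripke lattice model where the accessibility relation `R`
(of agent `a`) is reflexive, the awareness map `π` (of agent `a`) is idempotent:
for all worlds `w_X` of the lattice, `π(π(w_X)) = π(w_X)`. -/
theorem awarenessMap_idempotent (R : W → W → Prop) (π : W × Set At → W × Set At)
    (hD : Downwards π) (hII : IntroIdem R π) (hNS : NoSurprises π)
    (hrefl : ∀ w, R w w) :
    ∀ (w : W) (X : Set At), π (π (w, X)) = π (w, X) :=
  awarenessMap_idempotent_general π hD hNS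
end

section
/- Let M be an HMS model with maximal state-space T and let L(M) be its L-transform. For every w_Y in the Kripke lattice of L(M), if Π_a(w) ⊆ S and At(S) = Y, then v_Y ∈ I_a(w_Y) if and only if r^T_S(v) ∈ Π_a(w). (Lemma: information cells in the L-transform correspond to possibility sets.) -/
/-- Upward closure: for `D` a subset of the state-space `S`,
`D↑ = {w : S ⪯ st w and the projection of w to S lies in D}`. -/
def upcl {Ω Space : Type} [CompleteLattice Space] (st : Ω → Space)
    (proj : Space → Ω → Ω) (S : Space) (D : Set Ω) : Set Ω :=
  {w | S ≤ st w ∧ proj S w ∈ D}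

/-- An HMS model: a complete lattice of (disjoint, nonempty) state-spaces over the
states `Ω` (`st w` is the space of state `w`), surjective commuting projections
`proj S : {w : S ⪯ st w} → S`, possibility correspondences `Pi a` (with `PiSp a w`
the space containing `Pi a w`) satisfying Confinement, Generalized Reflexivity,
Stationarity, Projections Preserve Ignorance and Projections Preserve Knowledge,
and a valuation `val` into events (`valSp p` is the base space of the event `val p`,
so atom `p` has defined truth value at `s` iff `valSp p ⪯ st s`). -/
structure HMSModel (Ag At Ω Space : Type) [CompleteLattice Space] where
  st : Ω → Space
  space_nonempty : ∀ S : Space, ∃ w, st w = S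
  proj : Space → Ω → Ω
  proj_st : ∀ (S : Space) (w : Ω), S ≤ st w → st (proj S w) = S
  proj_self : ∀ w : Ω, proj (st w) w = w
  proj_comm : ∀ (S S' : Space) (w : Ω), S ≤ S' → S' ≤ st w →
    proj S (proj S' w) = proj S w
  proj_surj : ∀ (S S' : Space), S ≤ S' → ∀ s : Ω, st s = S →
    ∃ w : Ω, st w = S' ∧ proj S w = s
  Pi : Ag → Ω → Set Ω
  PiSp : Ag → Ω → Space
  Pi_space : ∀ (a : Ag) (w v : Ω), v ∈ Pi a w → st v = PiSp a w
  conf : ∀ (a : Ag) (w : Ω), PiSp a w ≤ st w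
  gref : ∀ (a : Ag) (w : Ω), proj (PiSp a w) w ∈ Pi a w
  stat : ∀ (a : Ag) (w v : Ω), v ∈ Pi a w → Pi a v = Pi a w ∧ PiSp a v = PiSp a w
  ppi : ∀ (a : Ag) (w : Ω) (S : Space), S ≤ st w →
    upcl st proj (PiSp a w) (Pi a w) ⊆
      upcl st proj (PiSp a (proj S w)) (Pi a (proj S w))
  ppk : ∀ (a : Ag) (w : Ω) (S : Space), S ≤ PiSp a w →
    (proj S) '' (Pi a w) = Pi a (proj S w)
  valSp : At → Space
  val : At → Set Ω
  val_space : ∀ (p : At) (s : Ω), s ∈ val p → valSp p ≤ st s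

variable {Ag At Ω Space : Type} [CompleteLattice Space]

/-- `At(S)`: the atoms with defined truth value throughout the state-space `S`. -/
def HMSModel.AtS (M : HMSModel Ag At Ω Space) (S : Space) : Set At :=
  {p | M.valSp p ≤ S}

/-- The accessibility relation of the `L`-transform of an HMS model, on the worlds of
the maximal state-space `T = ⊤`: `(w,v) ∈ R_a` iff `r^T_{S(Π_a(w))}(v) ∈ Π_a(w)`. -/
def HMSModel.Rt (M : HMSModel Ag At Ω Space) (a : Ag) (w v : Ω) : Prop :=
  M.proj (M.PiSp a w) v ∈ M.Pi a w

namespace HMSModel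

variable (M : HMSModel Ag At Ω Space) {a : Ag} {w : Ω} {S : Space}

theorem PiSp_eq_of_Pi_subset (hS : M.Pi a w ⊆ {u | M.st u = S}) : M.PiSp a w = S := by
  have h := hS (M.gref a w)
  rwa [Set.mem_ofPred_eq, M.proj_st _ _ (M.conf a w)] at h

theorem Rt_iff_proj_mem (hS : M.Pi a w ⊆ {u | M.st u = S}) (v : Ω) :
    M.Rt a w v ↔ M.proj S v ∈ M.Pi a w := by
  rw [Rt, M.PiSp_eq_of_Pi_subset hS]

end HMSModel

theorem Ltransform_infoCell_iff_possibility_general (M : HMSModel Ag At Ω Space) (a : Ag)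
    (w v : Ω) (S : Space) (Y : Set At)
    (hS : M.Pi a w ⊆ {u | M.st u = S}) :
    ((v, Y) ∈ {q : Ω × Set At | q.2 = Y ∧ M.Rt a w q.1}) ↔ M.proj S v ∈ M.Pi a w := by
  simpa only [Set.mem_ofPred_eq, true_and] using M.Rt_iff_proj_mem hS v

/-- (Lemma: information cells in the `L`-transform correspond to
possibility sets.) Let `M` be an HMS model with maximal state-space `T = ⊤` and `L(M)`
its `L`-transform. For every world `w_Y` of the Kripke lattice of `L(M)` (with `w, v`
in `T`), if `Π_a(w) ⊆ S` and `At(S) = Y`, then `v_Y` belongs to the information cell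
`I_a(w_Y) = {u_Y : (w_Y, u_Y) ∈ R_{Ya}}` (with `R_{Ya}` inherited from `R_a`)
iff `r^T_S(v) ∈ Π_a(w)`. -/
theorem Ltransform_infoCell_iff_possibility (M : HMSModel Ag At Ω Space) (a : Ag)
    (w v : Ω) (hw : M.st w = ⊤) (hv : M.st v = ⊤) (S : Space) (Y : Set At)
    (hS : M.Pi a w ⊆ {u | M.st u = S}) (hY : M.AtS S = Y) :
    ((v, Y) ∈ {q : Ω × Set At | q.2 = Y ∧ M.Rt a w q.1}) ↔ M.proj S v ∈ M.Pi a w :=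
  Ltransform_infoCell_iff_possibility_general M a w v S Y hS
end

section
/- If M is an HMS model, then in the L-transform L(M), each accessibility relation R_a is transitive. -/
variable {Ag At Ω Space : Type} [CompleteLattice Space]

namespace HMSModel

variable (M : HMSModel Ag At Ω Space) {a : Ag} {w v u : Ω}

-- PPI at `v`, projected to the space of `Π_a(w)`, where Stationarity recovers `Π_a(w)` itself.
theorem upcl_Pi_subset_of_Rt (hv : M.PiSp a w ≤ M.st v) (hwv : M.Rt a w v) :
    upcl M.st M.proj (M.PiSp a v) (M.Pi a v) ⊆ upcl M.st M.proj (M.PiSp a w) (M.Pi a w) := by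
  obtain ⟨hPi, hSp⟩ := M.stat a w _ hwv
  simpa only [hPi, hSp] using M.ppi a v (M.PiSp a w) hv

theorem Rt_trans (hv : M.PiSp a w ≤ M.st v) (hu : M.PiSp a v ≤ M.st u)
    (hwv : M.Rt a w v) (hvu : M.Rt a v u) : M.Rt a w u :=
  (M.upcl_Pi_subset_of_Rt hv hwv ⟨hu, hvu⟩).2

end HMSModel

/-- If `M` is an HMS model, then in the `L`-transform `L(M)` each
accessibility relation `R_a` (on the worlds of the maximal state-space `T = ⊤`) is
transitive. -/
theorem Ltransform_transitive (M : HMSModel Ag At Ω Space) (a : Ag) :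
    ∀ w v u : Ω, M.st w = ⊤ → M.st v = ⊤ → M.st u = ⊤ →
      M.Rt a w v → M.Rt a v u → M.Rt a w u := by
  intro w v u _ hv hu
  exact M.Rt_trans (hv ▸ le_top) (hu ▸ le_top)
end

section
/- For any HMS model M, the awareness maps π_a of the L-transform L(M) satisfy the Downwards property: for all w_X, π_a(w_X) = w_Y for some Y ⊆ X. -/
variable {Ag At Ω Space : Type} [CompleteLattice Space]

namespace HMSModel

variable (M : HMSModel Ag At Ω Space)

theorem AtS_monotone : Monotone M.AtS := fun _ _ h _ hp => le_trans hp h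

-- Generalized Reflexivity makes `Pi a w` nonempty, so the space containing it is unique.
theorem eq_PiSp_of_Pi_subset {a : Ag} {w : Ω} {S : Space}
    (h : M.Pi a w ⊆ {u | M.st u = S}) : S = M.PiSp a w :=
  (h (M.gref a w)).symm.trans (M.Pi_space a w _ (M.gref a w))

theorem PiSp_proj_le {a : Ag} {w : Ω} {S : Space} (hS : S ≤ M.st w) :
    M.PiSp a (M.proj S w) ≤ S :=
  (M.conf a _).trans_eq (M.proj_st S w hS)

end HMSModel

/-- For any HMS model `M`, the awareness maps `π_a` of the
`L`-transform `L(M)` satisfy Downwards: `π_a(w_X) = w_Y` for some `Y ⊆ X`.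
Here, per the definition of the `L`-transform, `π_a(w_X) = w_Y` where `Y = At(S_Y)`
for the state-space `S_Y` containing `Π_a(r^T_{S_X}(w))`, with
`S_X = min {S : At(S) = X}`; so the claim is `At(S_Y) ⊆ X`. -/
theorem Ltransform_downwards (M : HMSModel Ag At Ω Space) (a : Ag)
    (w : Ω) (hw : M.st w = ⊤) (X : Set At) (SX SY : Space)
    (hSX : IsLeast {S : Space | M.AtS S = X} SX)
    (hSY : M.Pi a (M.proj SX w) ⊆ {u | M.st u = SY}) :
    ∃ Y : Set At, M.AtS SY = Y ∧ Y ⊆ X := by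
  refine ⟨M.AtS SY, rfl, ?_⟩
  have hSY_le : SY ≤ SX := M.eq_PiSp_of_Pi_subset hSY ▸ M.PiSp_proj_le (hw ▸ le_top)
  exact hSX.1 ▸ M.AtS_monotone hSY_le
end

section
/- Let S = (W,R,V,𝒜) be an FH model satisfying 'agents know what they are aware of' (KA): (w,v) ∈ R_a implies 𝒜_a(w) = 𝒜_a(v). Then the map π_a defined on the restriction lattice of (W,R,V) by π_a(w_X) = w_{X ∩ Y(w)}, where Y(w) = ∪_{φ∈𝒜_a(w)} At(φ), satisfies Introspective Idempotence: if π_a(w_X) = w_Z then every v_Z ∈ I_a(w_Z) has π_a(v_Z) ∈ I_a(w_Z). -/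
/-- The language `𝓛` of explicit knowledge: `⊤ | p | ¬φ | φ ∧ φ | K_a φ`. -/
inductive Fml (At Ag : Type) : Type
  | top : Fml At Ag
  | atom : At → Fml At Ag
  | neg : Fml At Ag → Fml At Ag
  | conj : Fml At Ag → Fml At Ag → Fml At Ag
  | know : Ag → Fml At Ag → Fml At Ag

/-- `At(φ)`: the set of atoms occurring in `φ`. -/
def Fml.atoms {At Ag : Type} : Fml At Ag → Set At
  | .top => ∅
  | .atom p => {p}
  | .neg φ => φ.atoms
  | .conj φ ψ => φ.atoms ∪ ψ.atoms
  | .know _ φ => φ.atoms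

/-- An FH model (awareness structure): a Kripke model `(W, R, V)` together with an
awareness function `𝒜` assigning to each agent and world a set of formulas. -/
structure FHModel (Ag W At : Type) where
  rel : Ag → W → W → Prop
  val : At → Set W
  aware : Ag → W → Set (Fml At Ag)

variable {Ag W At : Type}

/-- `Y(w)` : the atoms occurring in formulas of `𝒜_a(w)`. -/
def FHModel.Yaw (S : FHModel Ag W At) (a : Ag) (w : W) : Set At :=
  ⋃ φ ∈ S.aware a w, Fml.atoms φ

/-- The awareness map of the `K`-transform: `π_a(w_X) = w_{X ∩ Y(w)}`. -/
def FHModel.piK (S : FHModel Ag W At) (a : Ag) (p : W × Set At) : W × Set At :=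
  (p.1, p.2 ∩ S.Yaw a p.1)

namespace FHModel

variable (S : FHModel Ag W At) (a : Ag)

theorem Yaw_congr {w v : W} (h : S.aware a w = S.aware a v) : S.Yaw a w = S.Yaw a v := by
  rw [Yaw, h, Yaw]

theorem piK_snd_subset_Yaw (p : W × Set At) : (S.piK a p).2 ⊆ S.Yaw a p.1 :=
  Set.inter_subset_right

theorem piK_of_subset_Yaw {v : W} {Z : Set At} (hZ : Z ⊆ S.Yaw a v) : S.piK a (v, Z) = (v, Z) := by
  rw [piK, Set.inter_eq_left.mpr hZ]

end FHModel

/-- Let `S = (W,R,V,𝒜)` be an FH model satisfying KA ("agents know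
what they are aware of"): `(w,v) ∈ R_a` implies `𝒜_a(w) = 𝒜_a(v)`. Then the map
`π_a(w_X) = w_{X ∩ Y(w)}`, `Y(w) = ⋃_{φ ∈ 𝒜_a(w)} At(φ)`, on the restriction lattice
of `(W,R,V)` satisfies Introspective Idempotence: if `π_a(w_X) = w_Z` then every
`v_Z ∈ I_a(w_Z)` has `π_a(v_Z) ∈ I_a(w_Z)`. -/
theorem Ktransform_introIdem (S : FHModel Ag W At) (a : Ag)
    (hKA : ∀ w v : W, S.rel a w v → S.aware a w = S.aware a v) :
    ∀ (w : W) (X Z : Set At), S.piK a (w, X) = (w, Z) →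
      ∀ v : W, S.rel a w v → ∃ u : W, S.rel a w u ∧ S.piK a (v, Z) = (u, Z) := by
  intro w X Z h v hv
  have hZw : Z ⊆ S.Yaw a w := by
    simpa only [h] using S.piK_snd_subset_Yaw a (w, X)
  have hZv : Z ⊆ S.Yaw a v := S.Yaw_congr a (hKA w v hv) ▸ hZw
  exact ⟨v, hv, S.piK_of_subset_Yaw a hZv⟩
end
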